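/- arXiv:1706.04150 — 3 statements merged into one kernel-verified Lean document; each statement's English description precedes it below -/
import Mathlib

section
/- Let P(λ) = ∑_{i=0}^{k} A_i λ^i be an n×n complex matrix polynomial of odd degree k ≥ 3 and let δ ∈ ℂ. Then ‖Δ(δ)‖₂ ≤ √(d₁(δ)) · max_{i=0,…,k} max{1, ‖A_i‖₂}. -/
/-!
Every block of `Δ(δ)` is `δ^e • I` or `δ^e • P_q(δ)`. With `M = max_i max{1, ‖A_i‖₂} ≥ 1`,
the triangle inequality gives `‖P_q(δ)‖₂ ≤ (∑_{s ≤ q} |δ|^s) · M`, and Cauchy–Schwarz turns the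
square of this into `(q + 1) ∑_{s ≤ q} |δ|^{2s} · M²`. The spectral norm of a block column is at
most the root of the sum of the squared spectral norms of its blocks, and summing the block
weights over the `k = 2m + 1` blocks gives exactly `d₁(δ)`: block `2j` contributes
`|δ|^{2(m-j)}`, block `2j + 1` the `r = m - j` term of the second sum.
-/

open Finset Matrix

noncomputable section
namespace MPoly

abbrev Mat (n : ℕ) := Matrix (Fin n) (Fin n) ℂ

variable {n : ℕ}

/-- Euclidean norm of a complex vector. -/
def vecNorm {ι : Type*} [Fintype ι] (x : ι → ℂ) : ℝ :=
  Real.sqrt (∑ i, ‖x i‖ ^ 2)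

/-- Spectral norm (operator norm induced by the Euclidean vector norm). -/
def specNorm {ι κ : Type*} [Fintype ι] [Fintype κ] [DecidableEq κ] (M : Matrix ι κ ℂ) : ℝ :=
  ‖LinearMap.toContinuousLinearMap (Matrix.toEuclideanLin M)‖

/-- Evaluation of the matrix polynomial `P(λ) = ∑_{i=0}^k A_i λ^i`. -/
def Peval (k : ℕ) (A : ℕ → Mat n) (lam : ℂ) : Mat n :=
  ∑ i ∈ Finset.range (k + 1), lam ^ i • A i

/-- Derivative `P′(λ) = ∑_{i=1}^k i A_i λ^{i-1}`. -/
def Pderiv (k : ℕ) (A : ℕ → Mat n) (lam : ℂ) : Mat n :=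
  ∑ i ∈ Finset.range k, (((i : ℂ) + 1) * lam ^ i) • A (i + 1)

/-- `i`-th Horner shift `P_i(λ) = ∑_{j=0}^i λ^j A_{k-i+j}`. -/
def horner (k : ℕ) (A : ℕ → Mat n) (i : ℕ) (lam : ℂ) : Mat n :=
  ∑ j ∈ Finset.range (i + 1), lam ^ j • A (k - i + j)

/-- `P^i(λ) = ∑_{j=0}^i λ^j A_j`. -/
def lowPart (A : ℕ → Mat n) (i : ℕ) (lam : ℂ) : Mat n :=
  ∑ j ∈ Finset.range (i + 1), lam ^ j • A j

/-- `q`-th (0-indexed) block of `Δ(λ)`. -/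
def DeltaBlock (k : ℕ) (A : ℕ → Mat n) (lam : ℂ) (q : ℕ) : Mat n :=
  if q % 2 = 0 then lam ^ ((k - 1 - q) / 2) • (1 : Mat n)
  else lam ^ ((k - q) / 2) • horner k A q lam

/-- The kn×n matrix `Δ(λ)`. -/
def Delta (k : ℕ) (A : ℕ → Mat n) (lam : ℂ) : Matrix (Fin k × Fin n) (Fin n) ℂ :=
  Matrix.of fun p b => DeltaBlock k A lam p.1.1 p.2 b

/-- The n×kn block-transpose `Δᴮ(λ)`. -/
def DeltaB (k : ℕ) (A : ℕ → Mat n) (lam : ℂ) : Matrix (Fin n) (Fin k × Fin n) ℂ :=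
  Matrix.of fun a q => DeltaBlock k A lam q.1.1 a q.2

/-- (0-indexed) blocks of `𝒯₁`. -/
def T1Block (k : ℕ) (A : ℕ → Mat n) (i j : ℕ) : Mat n :=
  if i = j then (if i % 2 = 0 then A (k - i) else 0)
  else if (j = i + 1 ∧ i % 2 = 1) ∨ (i = j + 1 ∧ j % 2 = 1) then 1 else 0

/-- (0-indexed) blocks of `𝒯₀`. -/
def T0Block (k : ℕ) (A : ℕ → Mat n) (i j : ℕ) : Mat n :=
  if i = j then (if i % 2 = 0 then -(A (k - i - 1)) else 0)
  else if (j = i + 1 ∧ i % 2 = 0) ∨ (i = j + 1 ∧ j % 2 = 0) then 1 else 0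

/-- `𝒯₁`. -/
def TT1 (k : ℕ) (A : ℕ → Mat n) : Matrix (Fin k × Fin n) (Fin k × Fin n) ℂ :=
  Matrix.of fun p q => T1Block k A p.1.1 q.1.1 p.2 q.2

/-- `𝒯₀`. -/
def TT0 (k : ℕ) (A : ℕ → Mat n) : Matrix (Fin k × Fin n) (Fin k × Fin n) ℂ :=
  Matrix.of fun p q => T0Block k A p.1.1 q.1.1 p.2 q.2

/-- The pencil `𝒯_P(λ) = λ𝒯₁ - 𝒯₀`. -/
def Tpencil (k : ℕ) (A : ℕ → Mat n) (lam : ℂ) : Matrix (Fin k × Fin n) (Fin k × Fin n) ℂ :=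
  lam • TT1 k A - TT0 k A

/-- Block anti-diagonal flip matrix `R`. -/
def Rmat (k n : ℕ) : Matrix (Fin k × Fin n) (Fin k × Fin n) ℂ :=
  Matrix.of fun p q => if p.1.1 + q.1.1 = k - 1 ∧ p.2 = q.2 then 1 else 0

/-- Block-diagonal sign matrix `S` (block `i` (1-indexed) is `-I` iff `i ≡ 0,1 mod 4`). -/
def Smat (k n : ℕ) : Matrix (Fin k × Fin n) (Fin k × Fin n) ℂ :=
  Matrix.of fun p q =>
    if p = q then (if (p.1.1 + 1) % 4 = 0 ∨ (p.1.1 + 1) % 4 = 1 then -1 else 1) else 0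

/-- `D = diag(I, -I, I, …, I)`. -/
def Dmat (k n : ℕ) : Matrix (Fin k × Fin n) (Fin k × Fin n) ℂ :=
  Matrix.of fun p q => if p = q then ((-1 : ℂ)) ^ p.1.1 else 0

/-- `e_k ⊗ I_n`: kn×n matrix with last block `I_n`. -/
def ekI (k n : ℕ) : Matrix (Fin k × Fin n) (Fin n) ℂ :=
  Matrix.of fun p b => if p.1.1 = k - 1 ∧ p.2 = b then 1 else 0

/-- The pencil `ℛ_P(λ) = S R 𝒯_P(λ) R S`. -/
def Rpencil (k : ℕ) (A : ℕ → Mat n) (lam : ℂ) : Matrix (Fin k × Fin n) (Fin k × Fin n) ℂ :=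
  Smat k n * Rmat k n * Tpencil k A lam * Rmat k n * Smat k n

/-- `max_{i=0:k} ‖A_i‖₂`. -/
def maxA (k : ℕ) (A : ℕ → Mat n) : ℝ :=
  (Finset.range (k + 1)).sup' Finset.nonempty_range_add_one fun i => specNorm (A i)

/-- `max_{i=0:k} max{1, ‖A_i‖₂}`. -/
def maxA1 (k : ℕ) (A : ℕ → Mat n) : ℝ :=
  (Finset.range (k + 1)).sup' Finset.nonempty_range_add_one fun i => max 1 (specNorm (A i))

/-- The quantity `d₁(δ)`. -/
def d1 (k : ℕ) (δ : ℂ) : ℝ :=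
  ∑ r ∈ Finset.range ((k - 1) / 2 + 1), ‖δ‖ ^ (2 * r)
    + ∑ r ∈ Finset.Icc 1 ((k - 1) / 2),
        ((k : ℝ) - 2 * r + 1) * ∑ s ∈ Finset.Icc r (k - r), ‖δ‖ ^ (2 * s)

/-- `ρ₁`. -/
def rho1 (k : ℕ) (A : ℕ → Mat n) : ℝ :=
  ((Finset.range (k + 1)).sup' Finset.nonempty_range_add_one fun i => max 1 (specNorm (A i) ^ 3))
    / min (specNorm (A k)) (specNorm (A 0))

/-- `ρ₂`. -/
def rho2 (k : ℕ) (A : ℕ → Mat n) : ℝ :=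
  min (max 1 (specNorm (A k))) (max 1 (specNorm (A 0))) / maxA k A

/-- `ρ′`. -/
def rho' (k : ℕ) (A : ℕ → Mat n) : ℝ :=
  ((Finset.range (k + 1)).sup' Finset.nonempty_range_add_one fun i => max 1 (specNorm (A i) ^ 2))
    / min (specNorm (A k)) (specNorm (A 0))

/-- `det P(λ)` as a polynomial in `λ`. -/
def detPoly (k : ℕ) (A : ℕ → Mat n) : Polynomial ℂ :=
  (∑ i ∈ Finset.range (k + 1), (Polynomial.X : Polynomial ℂ) ^ i • (A i).map Polynomial.C).det

/-- `L₁¹` (leading coefficient of `D₁(λ,P)`). -/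
def D1L1 (k : ℕ) (A : ℕ → Mat n) : Matrix (Fin k × Fin n) (Fin k × Fin n) ℂ :=
  Matrix.of fun p q =>
    (if p.1.1 = 0 ∧ q.1.1 = 0 then A k
     else if 1 ≤ p.1.1 ∧ 1 ≤ q.1.1 ∧ p.1.1 + q.1.1 ≤ k then -(A (k - p.1.1 - q.1.1))
     else 0) p.2 q.2

/-- `L₀¹` (trailing coefficient of `D₁(λ,P)`). -/
def D1L0 (k : ℕ) (A : ℕ → Mat n) : Matrix (Fin k × Fin n) (Fin k × Fin n) ℂ :=
  Matrix.of fun p q =>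
    (if p.1.1 + q.1.1 + 1 ≤ k then -(A (k - 1 - p.1.1 - q.1.1)) else 0) p.2 q.2

/-- `L₁ᵏ` (leading coefficient of `D_k(λ,P)`). -/
def DkL1 (k : ℕ) (A : ℕ → Mat n) : Matrix (Fin k × Fin n) (Fin k × Fin n) ℂ :=
  Matrix.of fun p q =>
    (if k - 1 ≤ p.1.1 + q.1.1 then A (2 * k - 1 - p.1.1 - q.1.1) else 0) p.2 q.2

/-- `L₀ᵏ` (trailing coefficient of `D_k(λ,P)`). -/
def DkL0 (k : ℕ) (A : ℕ → Mat n) : Matrix (Fin k × Fin n) (Fin k × Fin n) ℂ :=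
  Matrix.of fun p q =>
    (if p.1.1 = k - 1 ∧ q.1.1 = k - 1 then -(A 0)
     else if p.1.1 ≤ k - 2 ∧ q.1.1 ≤ k - 2 ∧ k - 2 ≤ p.1.1 + q.1.1
       then A (2 * k - 2 - p.1.1 - q.1.1)
     else 0) p.2 q.2

/-- `X₁` (leading coefficient of the first companion form `C₁(λ)`). -/
def C1X (k : ℕ) (A : ℕ → Mat n) : Matrix (Fin k × Fin n) (Fin k × Fin n) ℂ :=
  Matrix.of fun p q =>
    (if p.1 = q.1 then (if p.1.1 = 0 then A k else (1 : Mat n)) else 0) p.2 q.2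

/-- `Y₁` (trailing coefficient of the first companion form `C₁(λ)`). -/
def C1Y (k : ℕ) (A : ℕ → Mat n) : Matrix (Fin k × Fin n) (Fin k × Fin n) ℂ :=
  Matrix.of fun p q =>
    (if p.1.1 = 0 then -(A (k - 1 - q.1.1))
     else if p.1.1 = q.1.1 + 1 then (1 : Mat n) else 0) p.2 q.2

section SpecNorm

variable {ι κ : Type*} [Fintype ι] [Fintype κ] [DecidableEq κ]

lemma norm_toEuclideanLin_le (M : Matrix ι κ ℂ) (x : EuclideanSpace ℂ κ) :
    ‖Matrix.toEuclideanLin M x‖ ≤ specNorm M * ‖x‖ :=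
  (LinearMap.toContinuousLinearMap (Matrix.toEuclideanLin M)).le_opNorm x

lemma specNorm_nonneg (M : Matrix ι κ ℂ) : 0 ≤ specNorm M := norm_nonneg _

lemma specNorm_smul (c : ℂ) (M : Matrix ι κ ℂ) : specNorm (c • M) = ‖c‖ * specNorm M := by
  simp only [specNorm, _root_.map_smul, norm_smul]

lemma specNorm_sum_le {α : Type*} (s : Finset α) (f : α → Matrix ι κ ℂ) :
    specNorm (∑ i ∈ s, f i) ≤ ∑ i ∈ s, specNorm (f i) := by
  simp only [specNorm, map_sum]
  exact norm_sum_le _ _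

lemma specNorm_one_le : specNorm (1 : Matrix κ κ ℂ) ≤ 1 :=
  ContinuousLinearMap.opNorm_le_bound _ zero_le_one fun x => by
    simp

lemma specNorm_le_sqrt_sum_of_blocks {β : Type*} [Fintype β] (M : Matrix (β × ι) κ ℂ)
    (c : β → ℝ) (hc : ∀ q, specNorm (Matrix.of fun a => M (q, a)) ^ 2 ≤ c q) :
    specNorm M ≤ √(∑ q, c q) := by
  refine ContinuousLinearMap.opNorm_le_bound _ (Real.sqrt_nonneg _) fun x => ?_
  have hsq : ‖Matrix.toEuclideanLin M x‖ ^ 2 ≤ (∑ q, c q) * ‖x‖ ^ 2 := by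
    calc ‖Matrix.toEuclideanLin M x‖ ^ 2
        = ∑ q, ‖Matrix.toEuclideanLin (Matrix.of fun a => M (q, a)) x‖ ^ 2 := by
          simp only [EuclideanSpace.norm_sq_eq, Fintype.sum_prod_type]
          rfl
      _ ≤ ∑ q, c q * ‖x‖ ^ 2 := Finset.sum_le_sum fun q _ => by
          grw [norm_toEuclideanLin_le, mul_pow, hc q]
      _ = (∑ q, c q) * ‖x‖ ^ 2 := (Finset.sum_mul ..).symm
  calc ‖LinearMap.toContinuousLinearMap (Matrix.toEuclideanLin M) x‖
      = √(‖Matrix.toEuclideanLin M x‖ ^ 2) := (Real.sqrt_sq (norm_nonneg _)).symm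
    _ ≤ √((∑ q, c q) * ‖x‖ ^ 2) := Real.sqrt_le_sqrt hsq
    _ = √(∑ q, c q) * ‖x‖ := by rw [Real.sqrt_mul' _ (sq_nonneg _), Real.sqrt_sq (norm_nonneg _)]

end SpecNorm

lemma sq_sum_range_pow_le (x : ℝ) (q : ℕ) :
    (∑ s ∈ range (q + 1), x ^ s) ^ 2 ≤ (q + 1) * ∑ s ∈ range (q + 1), x ^ (2 * s) := by
  have h := sq_sum_le_card_mul_sum_sq (s := range (q + 1)) (f := fun s => x ^ s)
  simp only [card_range, Nat.cast_add_one, ← pow_mul, mul_comm _ 2] at h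
  exact h

lemma sum_range_two_mul_add_one {M : Type*} [AddCommMonoid M] (f : ℕ → M) (m : ℕ) :
    ∑ q ∈ range (2 * m + 1), f q
      = ∑ j ∈ range (m + 1), f (2 * j) + ∑ j ∈ range m, f (2 * j + 1) := by
  induction m with
  | zero => simp
  | succ m ih =>
    rw [show 2 * (m + 1) + 1 = 2 * m + 1 + 1 + 1 by ring, sum_range_succ, sum_range_succ, ih]
    simp only [sum_range_succ, mul_add, mul_one]
    abel

lemma one_le_maxA1 (k : ℕ) (A : ℕ → Mat n) : 1 ≤ maxA1 k A :=
  (le_max_left _ _).trans (le_sup' (fun i => max 1 (specNorm (A i))) (mem_range.2 k.succ_pos))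

lemma specNorm_le_maxA1 {k i : ℕ} (A : ℕ → Mat n) (hi : i ≤ k) : specNorm (A i) ≤ maxA1 k A :=
  (le_max_right _ _).trans
    (le_sup' (fun i => max 1 (specNorm (A i))) (mem_range.2 (Nat.lt_succ_of_le hi)))

lemma specNorm_horner_le {k q : ℕ} (A : ℕ → Mat n) (δ : ℂ) (hq : q ≤ k) :
    specNorm (horner k A q δ) ≤ (∑ s ∈ range (q + 1), ‖δ‖ ^ s) * maxA1 k A := by
  refine (specNorm_sum_le _ _).trans ?_
  rw [sum_mul]
  refine sum_le_sum fun s hs => ?_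
  rw [specNorm_smul, norm_pow]
  exact mul_le_mul_of_nonneg_left (specNorm_le_maxA1 A (by grind)) (by positivity)

def blockWeight (k : ℕ) (δ : ℂ) (q : ℕ) : ℝ :=
  if q % 2 = 0 then ‖δ‖ ^ (2 * ((k - 1 - q) / 2))
  else (q + 1 : ℝ) * ∑ s ∈ range (q + 1), ‖δ‖ ^ (2 * ((k - q) / 2 + s))

lemma specNorm_deltaBlock_sq_le {k q : ℕ} (A : ℕ → Mat n) (δ : ℂ) (hq : q ≤ k) :
    specNorm (DeltaBlock k A δ q) ^ 2 ≤ blockWeight k δ q * maxA1 k A ^ 2 := by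
  have hM : 1 ≤ maxA1 k A := one_le_maxA1 k A
  rw [DeltaBlock, blockWeight]
  split_ifs
  · rw [specNorm_smul, norm_pow, mul_pow, ← pow_mul, mul_comm _ 2]
    exact mul_le_mul_of_nonneg_left
      (pow_le_pow_left₀ (specNorm_nonneg _) (specNorm_one_le.trans hM) 2) (by positivity)
  · have hweight : ((q + 1 : ℝ) * ∑ s ∈ range (q + 1), ‖δ‖ ^ (2 * ((k - q) / 2 + s)))
        = (‖δ‖ ^ ((k - q) / 2)) ^ 2 * ((q + 1) * ∑ s ∈ range (q + 1), ‖δ‖ ^ (2 * s)) := by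
      simp only [mul_sum, mul_add, pow_add, ← pow_mul]
      exact sum_congr rfl fun s _ => by ring
    rw [specNorm_smul, norm_pow, hweight, mul_pow, mul_assoc]
    gcongr
    calc specNorm (horner k A q δ) ^ 2
        ≤ ((∑ s ∈ range (q + 1), ‖δ‖ ^ s) * maxA1 k A) ^ 2 :=
          pow_le_pow_left₀ (specNorm_nonneg _) (specNorm_horner_le A δ hq) 2
      _ ≤ (q + 1) * (∑ s ∈ range (q + 1), ‖δ‖ ^ (2 * s)) * maxA1 k A ^ 2 := by
          rw [mul_pow]
          gcongr
          exact sq_sum_range_pow_le _ _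

lemma d1_eq_sum_blockWeight {k m : ℕ} (hk : k = 2 * m + 1) (δ : ℂ) :
    d1 k δ = ∑ q ∈ range k, blockWeight k δ q := by
  subst hk
  rw [d1, sum_range_two_mul_add_one, show (2 * m + 1 - 1) / 2 = m by omega]
  congr 1
  · rw [← sum_range_reflect]
    refine sum_congr rfl fun j hj => ?_
    rw [blockWeight, if_pos (by omega)]
    congr 2
    grind
  · rw [← Ico_add_one_right_eq_Icc, sum_Ico_eq_sum_range, Nat.add_sub_cancel, ← sum_range_reflect]
    refine sum_congr rfl fun j hj => ?_
    have hj : j < m := mem_range.1 hj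
    rw [blockWeight, if_neg (by omega), ← Ico_add_one_right_eq_Icc, sum_Ico_eq_sum_range]
    have hr : 1 + (m - 1 - j) = m - j := by omega
    have hlen : 2 * m + 1 - (m - j) + 1 - (m - j) = 2 * j + 1 + 1 := by omega
    rw [hr, hlen, Nat.cast_sub hj.le]
    push_cast
    congr 1
    · ring
    · exact sum_congr rfl fun s _ => by congr 2; omega

theorem stmt_3_general {n k : ℕ} (hk : Odd k) (A : ℕ → Mat n)
    (δ : ℂ) :
    specNorm (Delta k A δ) ≤ Real.sqrt (d1 k δ) * maxA1 k A := by
  obtain ⟨m, hm⟩ := hk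
  calc specNorm (Delta k A δ)
      ≤ √(∑ q : Fin k, blockWeight k δ q * maxA1 k A ^ 2) :=
        specNorm_le_sqrt_sum_of_blocks _ _ fun q => specNorm_deltaBlock_sq_le (q := q) A δ q.2.le
    _ = √(d1 k δ) * maxA1 k A := by
        rw [← sum_mul, Fin.sum_univ_eq_sum_range (blockWeight k δ), ← d1_eq_sum_blockWeight hm,
          Real.sqrt_mul' _ (sq_nonneg _), Real.sqrt_sq (zero_le_one.trans (one_le_maxA1 k A))]

theorem stmt_3 {n k : ℕ} (hk : Odd k) (hk3 : 3 ≤ k) (A : ℕ → Mat n) (hAk : A k ≠ 0)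
    (δ : ℂ) :
    specNorm (Delta k A δ) ≤ Real.sqrt (d1 k δ) * maxA1 k A :=
  stmt_3_general hk A δ

end MPoly
end
end

section
/- Let P(λ) = ∑_{i=0}^{k} A_i λ^i be an n×n complex matrix polynomial of odd degree k ≥ 3. Then for every λ ∈ ℂ: 𝒯_P(λ) · Δ(λ) = (e_k ⊗ I_n) · P(λ) and Δᴮ(λ) · 𝒯_P(λ) = P(λ) · (e_k ⊗ I_n)ᵀ, where e_k ⊗ I_n is the kn×n matrix whose last n×n block is I_n and whose remaining blocks are zero. -/
/-!
Extend `Δ(λ)` by a `(k+1)`-st block `P_k(λ) = P(λ)` (the odd-block formula at `q = k`). Every block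
row of `𝒯_P(λ)` times the extended `Δ(λ)` vanishes: odd rows by a cancellation of powers of `λ`,
even rows by the Horner recurrence `P_{i+1} = λ P_i + A_{k-i-1}`. Dropping the extra block removes
the term `T_{k-1,k} P(λ) = -P(λ)` from the last row only. For `Δᴮ(λ) 𝒯_P(λ)`, the blocks of `𝒯_P`
are symmetric and each product `Δ_q T_{qi}` has a scalar factor (`Δ_q` for `q` even, `T_{qi}` for
`q` odd), so the column sums are the row sums already computed.
-/

open Finset Matrix

noncomputable section
namespace MPoly

variable {n : ℕ}

-- The blocks of `𝒯_P(λ)`, 0-indexed and defined for all `i j : ℕ`, also beyond the size `k`.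
def TpBlock (k : ℕ) (A : ℕ → Mat n) (lam : ℂ) (i j : ℕ) : Mat n :=
  if i = j then (if i % 2 = 0 then lam • A (k - i) + A (k - i - 1) else 0)
  else if (j = i + 1 ∧ i % 2 = 1) ∨ (i = j + 1 ∧ j % 2 = 1) then lam • 1
  else if (j = i + 1 ∧ i % 2 = 0) ∨ (i = j + 1 ∧ j % 2 = 0) then -1
  else 0

lemma Tpencil_apply (k : ℕ) (A : ℕ → Mat n) (lam : ℂ) (p q : Fin k × Fin n) :
    Tpencil k A lam p q = TpBlock k A lam p.1 q.1 p.2 q.2 := by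
  simp only [Tpencil, TT1, TT0, Matrix.sub_apply, Matrix.smul_apply, of_apply, T1Block, T0Block,
    TpBlock]
  split_ifs <;> first | (exfalso; omega) | simp_all [sub_eq_add_neg]

lemma TpBlock_comm (k : ℕ) (A : ℕ → Mat n) (lam : ℂ) (i j : ℕ) :
    TpBlock k A lam i j = TpBlock k A lam j i := by
  unfold TpBlock
  split_ifs <;> first | rfl | (exfalso; omega) | (subst_vars; rfl)

lemma TpBlock_eq_zero (k : ℕ) (A : ℕ → Mat n) (lam : ℂ) {i j : ℕ} (h : j + 1 < i ∨ i + 1 < j) :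
    TpBlock k A lam i j = 0 := by
  unfold TpBlock
  rw [if_neg (by omega), if_neg (by omega), if_neg (by omega)]

lemma exists_TpBlock_eq_smul_one (k : ℕ) (A : ℕ → Mat n) (lam : ℂ) (i : ℕ) {j : ℕ}
    (hj : j % 2 = 1) : ∃ c : ℂ, TpBlock k A lam i j = c • 1 := by
  unfold TpBlock
  split_ifs
  exacts [(by omega), ⟨0, by simp⟩, ⟨lam, rfl⟩, ⟨-1, by simp⟩, ⟨0, by simp⟩]

lemma horner_zero (k : ℕ) (A : ℕ → Mat n) (lam : ℂ) : horner k A 0 lam = A k := by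
  simp [horner]

lemma horner_succ (k : ℕ) (A : ℕ → Mat n) (lam : ℂ) {q : ℕ} (h : q + 1 ≤ k) :
    horner k A (q + 1) lam = lam • horner k A q lam + A (k - (q + 1)) := by
  rw [horner, sum_range_succ', horner, smul_sum]
  congr 1
  · refine sum_congr rfl fun j _ => ?_
    rw [smul_smul, ← pow_succ', show k - (q + 1) + (j + 1) = k - q + j by omega]
  · simp

lemma horner_self (k : ℕ) (A : ℕ → Mat n) (lam : ℂ) : horner k A k lam = Peval k A lam := by
  simp [horner, Peval]

lemma DeltaBlock_of_even {k q : ℕ} (A : ℕ → Mat n) (lam : ℂ) (hq : q % 2 = 0) :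
    DeltaBlock k A lam q = lam ^ ((k - 1 - q) / 2) • 1 :=
  if_pos hq

lemma DeltaBlock_of_odd {k q : ℕ} (A : ℕ → Mat n) (lam : ℂ) (hq : q % 2 = 1) :
    DeltaBlock k A lam q = lam ^ ((k - q) / 2) • horner k A q lam :=
  if_neg (by omega)

lemma DeltaBlock_self {k : ℕ} (hk : Odd k) (A : ℕ → Mat n) (lam : ℂ) :
    DeltaBlock k A lam k = Peval k A lam := by
  rw [DeltaBlock_of_odd A lam (Nat.odd_iff.mp hk), Nat.sub_self, pow_zero, one_smul, horner_self]

lemma sum_range_TpBlock_zero_mul (k : ℕ) (A : ℕ → Mat n) (lam : ℂ) (M : ℕ → Mat n) {K : ℕ}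
    (hK : 1 < K) :
    ∑ q ∈ range K, TpBlock k A lam 0 q * M q =
      TpBlock k A lam 0 0 * M 0 + TpBlock k A lam 0 1 * M 1 := by
  rw [← sum_subset (s₁ := {0, 1}) (by intro q; simp; omega) fun q _ hq => ?_, sum_pair zero_ne_one]
  rw [TpBlock_eq_zero k A lam (by simp at hq; omega), zero_mul]

lemma sum_range_TpBlock_succ_mul (k : ℕ) (A : ℕ → Mat n) (lam : ℂ) (M : ℕ → Mat n) {K a : ℕ}
    (ha : a + 2 < K) :
    ∑ q ∈ range K, TpBlock k A lam (a + 1) q * M q =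
      TpBlock k A lam (a + 1) a * M a + TpBlock k A lam (a + 1) (a + 1) * M (a + 1)
        + TpBlock k A lam (a + 1) (a + 2) * M (a + 2) := by
  rw [← sum_subset (s₁ := {a, a + 1, a + 2}) (by intro q; simp; omega) fun q _ hq => ?_,
    sum_insert (by simp), sum_pair (by omega), add_assoc]
  rw [TpBlock_eq_zero k A lam (by simp at hq; omega), zero_mul]

lemma sum_range_succ_TpBlock_mul_DeltaBlock {k : ℕ} (hk : Odd k) (A : ℕ → Mat n) (lam : ℂ)
    {i : ℕ} (hi : i < k) :
    ∑ q ∈ range (k + 1), TpBlock k A lam i q * DeltaBlock k A lam q = 0 := by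
  have hk2 := Nat.odd_iff.mp hk
  rcases i with _ | a
  · rw [sum_range_TpBlock_zero_mul k A lam _ (by omega), DeltaBlock_of_even A lam rfl,
      DeltaBlock_of_odd A lam rfl, horner_succ k A lam (by omega), horner_zero]
    simp [TpBlock]
  rw [sum_range_TpBlock_succ_mul k A lam _ (by omega)]
  rcases Nat.mod_two_eq_zero_or_one a with ha | ha
  · rw [DeltaBlock_of_even (q := a) A lam ha, DeltaBlock_of_even (q := a + 2) A lam (by omega),
      show (k - 1 - a) / 2 = (k - 1 - (a + 2)) / 2 + 1 by omega]
    simp [TpBlock, ha, show (a + 1) % 2 = 1 by omega, show a ≠ a + 1 + 1 by omega, smul_smul,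
      pow_succ, mul_comm]
  · have horner_two : horner k A (a + 2) lam =
        lam • (lam • horner k A a lam + A (k - (a + 1))) + A (k - (a + 1) - 1) := by
      rw [horner_succ k A lam (q := a + 1) (by omega), horner_succ k A lam (by omega),
        show k - (a + 1 + 1) = k - (a + 1) - 1 by omega]
    rw [DeltaBlock_of_odd (q := a) A lam ha, DeltaBlock_of_even (q := a + 1) A lam (by omega),
      DeltaBlock_of_odd (q := a + 2) A lam (by omega), horner_two,
      show (k - a) / 2 = (k - (a + 2)) / 2 + 1 by omega,
      show (k - 1 - (a + 1)) / 2 = (k - (a + 2)) / 2 by omega]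
    simp [TpBlock, ha, show (a + 1) % 2 = 0 by omega, pow_succ]
    module

lemma sum_range_TpBlock_mul_DeltaBlock {k : ℕ} (hk : Odd k) (A : ℕ → Mat n) (lam : ℂ)
    {i : ℕ} (hi : i < k) :
    ∑ q ∈ range k, TpBlock k A lam i q * DeltaBlock k A lam q =
      if i = k - 1 then Peval k A lam else 0 := by
  have hrow := sum_range_succ_TpBlock_mul_DeltaBlock hk A lam hi
  rw [sum_range_succ, DeltaBlock_self hk, add_eq_zero_iff_eq_neg] at hrow
  rw [hrow]
  split_ifs with hik
  · have hk2 := Nat.odd_iff.mp hk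
    simp [TpBlock, show k = i + 1 by omega, show i % 2 = 0 by omega, show i ≠ i + 1 + 1 by omega]
  · rw [TpBlock_eq_zero k A lam (by omega), zero_mul, neg_zero]

lemma DeltaBlock_mul_TpBlock {k : ℕ} (A : ℕ → Mat n) (lam : ℂ) (q i : ℕ) :
    DeltaBlock k A lam q * TpBlock k A lam q i = TpBlock k A lam i q * DeltaBlock k A lam q := by
  rw [TpBlock_comm k A lam q i]
  rcases Nat.mod_two_eq_zero_or_one q with hq | hq
  · rw [DeltaBlock_of_even A lam hq]
    exact ((Commute.one_left _).smul_left _).eq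
  · obtain ⟨c, hc⟩ := exists_TpBlock_eq_smul_one k A lam i hq
    rw [hc]
    exact ((Commute.one_right _).smul_right _).eq

lemma sum_range_DeltaBlock_mul_TpBlock {k : ℕ} (hk : Odd k) (A : ℕ → Mat n) (lam : ℂ)
    {i : ℕ} (hi : i < k) :
    ∑ q ∈ range k, DeltaBlock k A lam q * TpBlock k A lam q i =
      if i = k - 1 then Peval k A lam else 0 := by
  simp only [DeltaBlock_mul_TpBlock A lam _ i]
  exact sum_range_TpBlock_mul_DeltaBlock hk A lam hi

lemma Tpencil_mul_Delta_apply (k : ℕ) (A : ℕ → Mat n) (lam : ℂ) (p : Fin k × Fin n)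
    (b : Fin n) :
    (Tpencil k A lam * Delta k A lam) p b =
      (∑ q ∈ range k, TpBlock k A lam p.1 q * DeltaBlock k A lam q) p.2 b := by
  rw [Matrix.sum_apply, ← Fin.sum_univ_eq_sum_range, mul_apply, Fintype.sum_prod_type]
  simp only [Tpencil_apply, Delta, of_apply, mul_apply]

lemma DeltaB_mul_Tpencil_apply (k : ℕ) (A : ℕ → Mat n) (lam : ℂ) (a : Fin n)
    (p : Fin k × Fin n) :
    (DeltaB k A lam * Tpencil k A lam) a p =
      (∑ q ∈ range k, DeltaBlock k A lam q * TpBlock k A lam q p.1) a p.2 := by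
  rw [Matrix.sum_apply, ← Fin.sum_univ_eq_sum_range, mul_apply, Fintype.sum_prod_type]
  simp only [Tpencil_apply, DeltaB, of_apply, mul_apply]

lemma ekI_mul_apply (k : ℕ) (M : Mat n) (p : Fin k × Fin n) (b : Fin n) :
    (ekI k n * M) p b = (if p.1.1 = k - 1 then M else 0) p.2 b := by
  split_ifs with hp <;> simp [ekI, mul_apply, hp]

lemma mul_ekI_transpose_apply (k : ℕ) (M : Mat n) (a : Fin n) (p : Fin k × Fin n) :
    (M * (ekI k n)ᵀ) a p = (if p.1.1 = k - 1 then M else 0) a p.2 := by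
  split_ifs with hp <;> simp [ekI, mul_apply, hp]

theorem stmt_5_general {n k : ℕ} (hk : Odd k) (A : ℕ → Mat n) (lam : ℂ) :
    Tpencil k A lam * Delta k A lam = ekI k n * Peval k A lam
    ∧ DeltaB k A lam * Tpencil k A lam = Peval k A lam * (ekI k n)ᵀ := by
  constructor
  · ext p b
    rw [Tpencil_mul_Delta_apply, sum_range_TpBlock_mul_DeltaBlock hk A lam p.1.isLt,
      ekI_mul_apply]
  · ext a p
    rw [DeltaB_mul_Tpencil_apply, sum_range_DeltaBlock_mul_TpBlock hk A lam p.1.isLt,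
      mul_ekI_transpose_apply]

theorem stmt_5 {n k : ℕ} (hk : Odd k) (hk3 : 3 ≤ k) (A : ℕ → Mat n) (hAk : A k ≠ 0)
    (lam : ℂ) :
    Tpencil k A lam * Delta k A lam = ekI k n * Peval k A lam
    ∧ DeltaB k A lam * Tpencil k A lam = Peval k A lam * (ekI k n)ᵀ :=
  stmt_5_general hk A lam

end MPoly
end
end

section
/- Let P(λ) = ∑_{i=0}^{k} A_i λ^i be an n×n complex matrix polynomial of odd degree k ≥ 3 with A_0 ≠ 0. Then for every nonzero λ ∈ ℂ, 𝒯_P(λ) = λ · D R · 𝒯_{rev P}(1/λ) · R D. Moreover, for every nonzero δ ∈ ℂ: a vector z ∈ ℂ^{kn} is a right eigenvector of 𝒯_P associated with δ (i.e. z ≠ 0 and 𝒯_P(δ)z = 0) if and only if R D z is a right eigenvector of 𝒯_{rev P} associated with 1/δ, and z is a left eigenvector of 𝒯_P associated with δ (i.e. z ≠ 0 and z*𝒯_P(δ) = 0) if and only if R D z is a left eigenvector of 𝒯_{rev P} associated with 1/δ. -/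
open Finset Matrix

noncomputable section
namespace MPoly

variable {n : ℕ}

/-! Conjugation by `D R` turns the coefficients of `𝒯_P` into those of `𝒯_{rev P}` with the roles
of `𝒯₁` and `𝒯₀` exchanged, up to a global sign. Reversing the block order `i ↦ k - 1 - i`
preserves parity because `k` is odd, so it matches the diagonal blocks `A_{k-i}` of `𝒯₁` with the
blocks `-(rev P)_{k-i'-1} = -A_{k-i}` of `𝒯₀`, and the identity couplings of `𝒯₁` with those of
`𝒯₀`; the off-diagonal couplings need the extra sign `(-1)^{i+j} = -1` supplied by `D`. Hence
`λ𝒯₁ - 𝒯₀ = λ • D R (λ⁻¹𝒯₁' - 𝒯₀') R D`. Since `D R` and `R D` are mutually inverse and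
`(R D)ᴴ = D R`, the null vectors of the two pencils correspond. -/

section Conjugation

variable {ι K : Type*} [Fintype ι] [DecidableEq ι] [Field K] {B C T T' : Matrix ι ι K} {c : K}

lemma mulVec_eq_zero_iff_of_eq_smul_mul_mul (hB : IsUnit B) (hc : c ≠ 0)
    (hT : T = c • (B * T' * C)) (z : ι → K) :
    T *ᵥ z = 0 ↔ T' *ᵥ (C *ᵥ z) = 0 := by
  rw [hT, smul_mulVec, ← mulVec_mulVec, ← mulVec_mulVec, smul_eq_zero, or_iff_right hc,
    (mulVec_injective_of_isUnit hB).eq_iff' (mulVec_zero B)]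

lemma vecMul_eq_zero_iff_of_eq_smul_mul_mul (hC : IsUnit C) (hc : c ≠ 0)
    (hT : T = c • (B * T' * C)) (w : ι → K) :
    w ᵥ* T = 0 ↔ (w ᵥ* B) ᵥ* T' = 0 := by
  rw [hT, vecMul_smul, ← vecMul_vecMul, ← vecMul_vecMul, smul_eq_zero, or_iff_right hc,
    (vecMul_injective_of_isUnit hC).eq_iff' (zero_vecMul C)]

end Conjugation

variable {k : ℕ}

def blockRev (k n : ℕ) : Equiv.Perm (Fin k × Fin n) :=
  Equiv.prodCongr Fin.revPerm (Equiv.refl _)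

lemma Rmat_eq_toMatrix : Rmat k n = (blockRev k n).toPEquiv.toMatrix := by
  ext p q
  have hp := p.1.isLt
  have hq := q.1.isLt
  simp only [Rmat, blockRev, of_apply, PEquiv.toMatrix_apply, Equiv.toPEquiv_apply,
    Option.mem_def, Option.some.injEq, Equiv.prodCongr_apply, Prod.map, Prod.ext_iff,
    Fin.ext_iff, Fin.revPerm_apply, Fin.val_rev, Equiv.refl_apply]
  congr 1
  apply propext
  omega

lemma Dmat_eq_diagonal : Dmat k n = diagonal fun p : Fin k × Fin n => (-1 : ℂ) ^ p.1.1 := by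
  ext p q
  simp [Dmat, diagonal_apply]

lemma Rmat_mul_self : Rmat k n * Rmat k n = 1 := by
  have hrev : (blockRev k n).trans (blockRev k n) = Equiv.refl _ :=
    Equiv.ext fun p => by simp [blockRev, Prod.map]
  rw [Rmat_eq_toMatrix, ← PEquiv.toMatrix_trans, ← Equiv.toPEquiv_trans, hrev,
    Equiv.toPEquiv_refl, PEquiv.toMatrix_refl]

lemma Dmat_mul_self : Dmat k n * Dmat k n = 1 := by
  rw [Dmat_eq_diagonal, diagonal_mul_diagonal, ← diagonal_one]
  congr 1
  funext p
  rw [← mul_pow, neg_one_mul, neg_neg, one_pow]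

lemma conjTranspose_Rmat : (Rmat k n)ᴴ = Rmat k n := by
  ext p q
  simp only [conjTranspose_apply, Rmat, of_apply, add_comm q.1.1, eq_comm (a := q.2)]
  split_ifs <;> simp

lemma conjTranspose_Dmat : (Dmat k n)ᴴ = Dmat k n := by
  rw [Dmat_eq_diagonal, diagonal_conjTranspose]
  simp

lemma Dmat_mul_Rmat_mul_mul_Rmat_mul_Dmat_apply (M : Matrix (Fin k × Fin n) (Fin k × Fin n) ℂ)
    (p q : Fin k × Fin n) :
    (Dmat k n * Rmat k n * M * Rmat k n * Dmat k n) p q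
      = (-1) ^ (p.1.1 + q.1.1) * M (blockRev k n p) (blockRev k n q) := by
  rw [Dmat_eq_diagonal, Rmat_eq_toMatrix, mul_diagonal, PEquiv.mul_toMatrix_toPEquiv,
    submatrix_apply, Matrix.mul_assoc, diagonal_mul, PEquiv.toMatrix_toPEquiv_mul,
    submatrix_apply, pow_add]
  simp [blockRev]
  ring

section Blocks

variable (A : ℕ → Mat n) {i j : ℕ}

lemma T1Block_eq_neg_T0Block_rev (hk : Odd k) (hi : i < k) (hj : j < k) :
    T1Block k A i j
      = -((-1 : ℂ) ^ (i + j) • T0Block k (fun t => A (k - t)) (k - (i + 1)) (k - (j + 1))) := by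
  obtain ⟨m, rfl⟩ := hk
  unfold T1Block T0Block
  split_ifs <;> first | omega | skip
  · rw [Even.neg_one_pow ⟨i, by omega⟩, show 2 * m + 1 - (2 * m + 1 - (i + 1)) - 1 = i by omega]
    simp
  · simp
  · rw [Odd.neg_one_pow (Nat.odd_iff.mpr (by omega))]
    simp
  · simp

lemma T0Block_eq_neg_T1Block_rev (hk : Odd k) (hi : i < k) (hj : j < k) :
    T0Block k A i j
      = -((-1 : ℂ) ^ (i + j) • T1Block k (fun t => A (k - t)) (k - (i + 1)) (k - (j + 1))) := by
  obtain ⟨m, rfl⟩ := hk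
  unfold T1Block T0Block
  split_ifs <;> first | omega | skip
  · rw [Even.neg_one_pow ⟨i, by omega⟩, show 2 * m + 1 - (2 * m + 1 - (i + 1)) = i + 1 by omega,
      show 2 * m + 1 - i - 1 = 2 * m + 1 - (i + 1) by omega]
    simp
  · simp
  · rw [Odd.neg_one_pow (Nat.odd_iff.mpr (by omega))]
    simp
  · simp

end Blocks

lemma TT1_eq_neg_conj_TT0_rev (hk : Odd k) (A : ℕ → Mat n) :
    TT1 k A = -(Dmat k n * Rmat k n * TT0 k (fun t => A (k - t)) * Rmat k n * Dmat k n) := by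
  ext p q
  rw [neg_apply, Dmat_mul_Rmat_mul_mul_Rmat_mul_Dmat_apply]
  simp only [TT1, TT0, of_apply, blockRev, Equiv.prodCongr_apply, Prod.map_fst, Prod.map_snd,
    Fin.revPerm_apply, Fin.val_rev, Equiv.refl_apply]
  rw [T1Block_eq_neg_T0Block_rev A hk p.1.isLt q.1.isLt]
  simp

lemma TT0_eq_neg_conj_TT1_rev (hk : Odd k) (A : ℕ → Mat n) :
    TT0 k A = -(Dmat k n * Rmat k n * TT1 k (fun t => A (k - t)) * Rmat k n * Dmat k n) := by
  ext p q
  rw [neg_apply, Dmat_mul_Rmat_mul_mul_Rmat_mul_Dmat_apply]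
  simp only [TT1, TT0, of_apply, blockRev, Equiv.prodCongr_apply, Prod.map_fst, Prod.map_snd,
    Fin.revPerm_apply, Fin.val_rev, Equiv.refl_apply]
  rw [T0Block_eq_neg_T1Block_rev A hk p.1.isLt q.1.isLt]
  simp

lemma Tpencil_eq_smul_conj_Tpencil_rev (hk : Odd k) (A : ℕ → Mat n) {lam : ℂ} (hlam : lam ≠ 0) :
    Tpencil k A lam
      = lam • (Dmat k n * Rmat k n * Tpencil k (fun i => A (k - i)) lam⁻¹
          * Rmat k n * Dmat k n) := by
  rw [Tpencil, Tpencil, TT1_eq_neg_conj_TT0_rev hk A, TT0_eq_neg_conj_TT1_rev hk A]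
  simp only [Matrix.mul_sub, Matrix.sub_mul, Matrix.mul_smul, Matrix.smul_mul, smul_sub,
    smul_smul, mul_inv_cancel₀ hlam, one_smul, smul_neg]
  abel

lemma isUnit_Dmat_mul_Rmat : IsUnit (Dmat k n * Rmat k n) := by
  refine isUnit_iff_exists.mpr ⟨Rmat k n * Dmat k n, ?_, ?_⟩
  · rw [Matrix.mul_assoc, ← Matrix.mul_assoc (Rmat k n), Rmat_mul_self, Matrix.one_mul,
      Dmat_mul_self]
  · rw [Matrix.mul_assoc, ← Matrix.mul_assoc (Dmat k n), Dmat_mul_self, Matrix.one_mul,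
      Rmat_mul_self]

lemma isUnit_Rmat_mul_Dmat : IsUnit (Rmat k n * Dmat k n) := by
  simpa [conjTranspose_Rmat, conjTranspose_Dmat] using
    (isUnit_Dmat_mul_Rmat (k := k) (n := n)).star

theorem stmt_9_general {n k : ℕ} (hk : Odd k) (A : ℕ → Mat n) :
    (∀ lam : ℂ, lam ≠ 0 →
      Tpencil k A lam
        = lam • (Dmat k n * Rmat k n * Tpencil k (fun i => A (k - i)) lam⁻¹
            * Rmat k n * Dmat k n))
    ∧ (∀ δ : ℂ, δ ≠ 0 → ∀ z : Fin k × Fin n → ℂ,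
        ((z ≠ 0 ∧ Tpencil k A δ *ᵥ z = 0)
          ↔ ((Rmat k n * Dmat k n) *ᵥ z ≠ 0
              ∧ Tpencil k (fun i => A (k - i)) δ⁻¹ *ᵥ ((Rmat k n * Dmat k n) *ᵥ z) = 0))
        ∧ ((z ≠ 0 ∧ Matrix.vecMul (star z) (Tpencil k A δ) = 0)
          ↔ ((Rmat k n * Dmat k n) *ᵥ z ≠ 0
              ∧ Matrix.vecMul (star ((Rmat k n * Dmat k n) *ᵥ z))
                  (Tpencil k (fun i => A (k - i)) δ⁻¹) = 0))) := by
  refine ⟨fun lam hlam => Tpencil_eq_smul_conj_Tpencil_rev hk A hlam, fun δ hδ z => ?_⟩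
  have hT : Tpencil k A δ = δ • (Dmat k n * Rmat k n * Tpencil k (fun i => A (k - i)) δ⁻¹
      * (Rmat k n * Dmat k n)) := by
    rw [Tpencil_eq_smul_conj_Tpencil_rev hk A hδ, ← Matrix.mul_assoc]
  rw [(mulVec_injective_of_isUnit isUnit_Rmat_mul_Dmat).ne_iff' (mulVec_zero _), star_mulVec,
    conjTranspose_mul, conjTranspose_Rmat, conjTranspose_Dmat,
    mulVec_eq_zero_iff_of_eq_smul_mul_mul isUnit_Dmat_mul_Rmat hδ hT,
    vecMul_eq_zero_iff_of_eq_smul_mul_mul isUnit_Rmat_mul_Dmat hδ hT]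
  exact ⟨Iff.rfl, Iff.rfl⟩

theorem stmt_9 {n k : ℕ} (hk : Odd k) (hk3 : 3 ≤ k) (A : ℕ → Mat n)
    (hAk : A k ≠ 0) (hA0 : A 0 ≠ 0) :
    (∀ lam : ℂ, lam ≠ 0 →
      Tpencil k A lam
        = lam • (Dmat k n * Rmat k n * Tpencil k (fun i => A (k - i)) lam⁻¹
            * Rmat k n * Dmat k n))
    ∧ (∀ δ : ℂ, δ ≠ 0 → ∀ z : Fin k × Fin n → ℂ,
        ((z ≠ 0 ∧ Tpencil k A δ *ᵥ z = 0)
          ↔ ((Rmat k n * Dmat k n) *ᵥ z ≠ 0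
              ∧ Tpencil k (fun i => A (k - i)) δ⁻¹ *ᵥ ((Rmat k n * Dmat k n) *ᵥ z) = 0))
        ∧ ((z ≠ 0 ∧ Matrix.vecMul (star z) (Tpencil k A δ) = 0)
          ↔ ((Rmat k n * Dmat k n) *ᵥ z ≠ 0
              ∧ Matrix.vecMul (star ((Rmat k n * Dmat k n) *ᵥ z))
                  (Tpencil k (fun i => A (k - i)) δ⁻¹) = 0))) :=
  stmt_9_general hk A

end MPoly
end
end
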